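/- Let G be an NG-graph with degree-based partition A_G = {v : deg(v) = χ(G) − 1}, B_G = {v : deg(v) > χ(G) − 1}, C_G = {v : deg(v) < χ(G) − 1}. Then for every y ∈ B_G and every x ∈ A_G ∪ B_G with x ≠ y, the pair xy is an edge of G. -/
import Mathlib


open SimpleGraph

variable {V : Type*} [Fintype V] [DecidableEq V]

/-- A coloring `f` with `r` colors is distinguishing for `G` if the identity is the
only automorphism of `G` preserving all colors. -/
def IsDistinguishing (G : SimpleGraph V) {r : ℕ} (f : V → Fin r) : Prop :=
  ∀ φ : G ≃g G, (∀ v, f (φ v) = f v) → ∀ v, φ v = v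

/-- A coloring is proper if adjacent vertices receive different colors. -/
def IsProperColoring (G : SimpleGraph V) {r : ℕ} (f : V → Fin r) : Prop :=
  ∀ u v, G.Adj u v → f u ≠ f v

/-- The distinguishing number of `G`: least `r` admitting a distinguishing coloring. -/
noncomputable def distNum (G : SimpleGraph V) : ℕ :=
  sInf {r : ℕ | ∃ f : V → Fin r, IsDistinguishing G f}

/-- The distinguishing chromatic number of `G`: least `r` admitting a proper
distinguishing coloring. -/
noncomputable def distChromNum (G : SimpleGraph V) : ℕ :=
  sInf {r : ℕ | ∃ f : V → Fin r, IsProperColoring G f ∧ IsDistinguishing G f}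

/-- The chromatic number of `G`, as a natural number. -/
noncomputable def chromNat {W : Type*} (G : SimpleGraph W) : ℕ :=
  G.chromaticNumber.toNat

/-- `G` is an NG-graph: `χ(G) + χ(Ḡ) = n + 1`. -/
def IsNG {W : Type*} [Finite W] (G : SimpleGraph W) : Prop :=
  chromNat G + chromNat Gᶜ = Nat.card W + 1

/-- `G` is an NGD-graph: `χ_D(G) + χ_D(Ḡ) = n + D(G)`. -/
noncomputable def IsNGD (G : SimpleGraph V) : Prop :=
  distChromNum G + distChromNum Gᶜ = Fintype.card V + distNum G

/-- `S` is an independent set of `G`. -/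
def IsIndepSet' (G : SimpleGraph V) (S : Set V) : Prop :=
  ∀ u ∈ S, ∀ v ∈ S, ¬ G.Adj u v

/-- The set of vertices of degree `χ(G) - 1`. -/
def setA (G : SimpleGraph V) [DecidableRel G.Adj] : Set V :=
  {v | G.degree v = chromNat G - 1}

/-- The set of vertices of degree greater than `χ(G) - 1`. -/
def setB (G : SimpleGraph V) [DecidableRel G.Adj] : Set V :=
  {v | G.degree v > chromNat G - 1}

/-- The set of vertices of degree less than `χ(G) - 1`. -/
def setC (G : SimpleGraph V) [DecidableRel G.Adj] : Set V :=
  {v | G.degree v < chromNat G - 1}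

section NGaux

noncomputable def chiN {W : Type*} [Fintype W] (G : SimpleGraph W) : ℕ :=
  sInf {n | G.Colorable n}

lemma chiN_colorable {W : Type*} [Fintype W] (G : SimpleGraph W) : G.Colorable (chiN G) :=
  Nat.sInf_mem (⟨Fintype.card W, G.colorable_of_fintype⟩ : {n | G.Colorable n}.Nonempty)

lemma chiN_le {W : Type*} [Fintype W] {G : SimpleGraph W} {n : ℕ} (h : G.Colorable n) :
    chiN G ≤ n := Nat.sInf_le h

lemma chromNat_eq_chiN {W : Type*} [Fintype W] (G : SimpleGraph W) :
    G.chromaticNumber.toNat = chiN G := by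
  apply le_antisymm
  · have h2 := G.colorable_chromaticNumber_of_fintype
    have h := (chiN_colorable G).chromaticNumber_le
    have := ENat.toNat_le_toNat h (by simp)
    simpa using this
  · exact chiN_le G.colorable_chromaticNumber_of_fintype

lemma induce_compl_eq {W : Type*} (G : SimpleGraph W) (s : Set W) :
    (G.induce s)ᶜ = Gᶜ.induce s := by
  ext a b
  show a ≠ b ∧ ¬ G.Adj a b ↔ Gᶜ.Adj (a : W) b
  rw [compl_adj]
  simp [Subtype.ext_iff, ne_eq]

lemma colorable_induce_univ_iff {W : Type*} (G : SimpleGraph W) {k : ℕ} :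
    (G.induce (Set.univ : Set W)).Colorable k ↔ G.Colorable k := by
  constructor
  · rintro ⟨C⟩; exact ⟨C.comp (G.induceUnivIso).symm.toHom⟩
  · rintro ⟨C⟩; exact ⟨C.comp (G.induceUnivIso).toHom⟩

lemma mem_coe_erase {W : Type*} [DecidableEq W] {s : Finset W} {v u : W}
    (hu : u ∈ (s : Set W)) (hne : u ≠ v) : u ∈ ((s.erase v : Finset W) : Set W) := by
  simp only [Finset.coe_erase, Set.mem_diff, Set.mem_singleton_iff]
  exact ⟨hu, hne⟩

lemma colorable_insert {W : Type*} [Fintype W] [DecidableEq W] (G : SimpleGraph W)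
    (s : Finset W) (v : W) (k : ℕ)
    (h : (G.induce ↑(s.erase v)).Colorable k)
    (t : Finset W) (ht : ∀ u ∈ s.erase v, G.Adj v u → u ∈ t) (htk : t.card + 1 ≤ k) :
    (G.induce (↑s : Set W)).Colorable k := by
  classical
  obtain ⟨f⟩ := h
  set A := (s.erase v) ∩ t with hA
  set used : Finset (Fin k) :=
    A.attach.image (fun u => f ⟨u.1, by
      exact Finset.mem_coe.mpr (Finset.mem_inter.mp u.2).1⟩) with hused
  have hcard : used.card < k := by
    calc used.card ≤ A.attach.card := Finset.card_image_le
    _ = A.card := Finset.card_attach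
    _ ≤ t.card := Finset.card_le_card (Finset.inter_subset_right)
    _ < k := by omega
  have : used ≠ Finset.univ := by
    intro h
    rw [h, Finset.card_univ, Fintype.card_fin] at hcard
    omega
  have : ¬ ∀ cc : Fin k, cc ∈ used := fun hall => this (Finset.eq_univ_iff_forall.mpr hall)
  push_neg at this
  obtain ⟨c, hc⟩ := this
  have memf : ∀ (u : W) (hu : u ∈ s.erase v), G.Adj v u →
      f ⟨u, Finset.mem_coe.mpr hu⟩ ∈ used := by
    intro u hu hadj
    have huA : u ∈ A := Finset.mem_inter.mpr ⟨hu, ht u hu hadj⟩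
    rw [hused]
    refine Finset.mem_image.mpr ⟨⟨u, huA⟩, Finset.mem_attach _ _, rfl⟩
  refine ⟨Coloring.mk (fun w => if hw : (w : W) = v then c else
      f ⟨w.1, Finset.mem_coe.mpr (Finset.mem_erase.mpr ⟨hw, Finset.mem_coe.mp w.2⟩)⟩) ?_⟩
  rintro ⟨u, hu⟩ ⟨w, hw⟩ hadj
  have hadj' : G.Adj u w := hadj
  by_cases h1 : u = v <;> by_cases h2 : w = v
  · exact absurd (h1.trans h2.symm) hadj'.ne
  · simp only [h1, dif_pos, dif_neg h2]
    have hwm : w ∈ s.erase v := Finset.mem_erase.mpr ⟨h2, Finset.mem_coe.mp hw⟩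
    exact fun hEq => hc (hEq ▸ memf w hwm (h1 ▸ hadj'))
  · simp only [h2, dif_pos, dif_neg h1]
    have hum : u ∈ s.erase v := Finset.mem_erase.mpr ⟨h1, Finset.mem_coe.mp hu⟩
    exact fun hEq => hc (hEq ▸ memf u hum (h2 ▸ hadj'.symm))
  · simp only [dif_neg h1, dif_neg h2]
    have : (G.induce ↑(s.erase v)).Adj
        ⟨u, Finset.mem_coe.mpr (Finset.mem_erase.mpr ⟨h1, Finset.mem_coe.mp hu⟩)⟩
        ⟨w, Finset.mem_coe.mpr (Finset.mem_erase.mpr ⟨h2, Finset.mem_coe.mp hw⟩)⟩ := hadj'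
    exact f.valid this

lemma colorable_insert_succ {W : Type*} [Fintype W] [DecidableEq W] (G : SimpleGraph W)
    (s : Finset W) (v : W) (k : ℕ)
    (h : (G.induce ↑(s.erase v)).Colorable k) :
    (G.induce (↑s : Set W)).Colorable (k + 1) := by
  obtain ⟨f⟩ := h
  refine ⟨Coloring.mk (fun w => if hw : (w : W) = v then Fin.last k else
      (f ⟨w.1, Finset.mem_coe.mpr (Finset.mem_erase.mpr ⟨hw, Finset.mem_coe.mp w.2⟩)⟩).castSucc) ?_⟩
  rintro ⟨u, hu⟩ ⟨w, hw⟩ hadj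
  have hadj' : G.Adj u w := hadj
  by_cases h1 : u = v <;> by_cases h2 : w = v
  · exact absurd (h1.trans h2.symm) hadj'.ne
  · simp only [h1, dif_pos, dif_neg h2]
    exact (Fin.castSucc_lt_last _).ne'
  · simp only [h2, dif_pos, dif_neg h1]
    exact (Fin.castSucc_lt_last _).ne
  · simp only [dif_neg h1, dif_neg h2]
    intro hEq
    have hEq' := Fin.castSucc_injective _ hEq
    have : (G.induce ↑(s.erase v)).Adj
        ⟨u, Finset.mem_coe.mpr (Finset.mem_erase.mpr ⟨h1, Finset.mem_coe.mp hu⟩)⟩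
        ⟨w, Finset.mem_coe.mpr (Finset.mem_erase.mpr ⟨h2, Finset.mem_coe.mp hw⟩)⟩ := hadj'
    exact f.valid this hEq'

lemma colorable_pair {W : Type*} [Fintype W] [DecidableEq W] (G : SimpleGraph W) {x y : W}
    (hne : x ≠ y) (hnadj : ¬ G.Adj x y) (m : ℕ)
    (h : (G.induce ↑((Finset.univ.erase y).erase x) : SimpleGraph _).Colorable m) :
    G.Colorable (m + 1) := by
  obtain ⟨f⟩ := h
  have memt : ∀ u : W, u ≠ x → u ≠ y → u ∈ (((Finset.univ.erase y).erase x : Finset W) : Set W) := by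
    intro u h1 h2
    exact Finset.mem_coe.mpr (Finset.mem_erase.mpr ⟨h1, Finset.mem_erase.mpr ⟨h2, Finset.mem_univ u⟩⟩)
  refine ⟨Coloring.mk (fun w => if hw : w = x ∨ w = y then Fin.last m else
      (f ⟨w, memt w (fun hh => hw (Or.inl hh)) (fun hh => hw (Or.inr hh))⟩).castSucc) ?_⟩
  intro u w hadj
  by_cases h1 : u = x ∨ u = y <;> by_cases h2 : w = x ∨ w = y
  · exfalso
    rcases h1 with h1 | h1 <;> rcases h2 with h2 | h2 <;> subst h1 <;> subst h2
    · exact hadj.ne rfl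
    · exact hnadj hadj
    · exact hnadj hadj.symm
    · exact hadj.ne rfl
  · simp only [dif_pos h1, dif_neg h2]
    exact (Fin.castSucc_lt_last _).ne'
  · simp only [dif_pos h2, dif_neg h1]
    exact (Fin.castSucc_lt_last _).ne
  · simp only [dif_neg h1, dif_neg h2]
    intro hEq
    have hEq' := Fin.castSucc_injective _ hEq
    have : (G.induce ↑((Finset.univ.erase y).erase x)).Adj
        ⟨u, memt u (fun hh => h1 (Or.inl hh)) (fun hh => h1 (Or.inr hh))⟩
        ⟨w, memt w (fun hh => h2 (Or.inl hh)) (fun hh => h2 (Or.inr hh))⟩ := hadj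
    exact f.valid this hEq'

lemma colorable_of_induce_univ_finset {W : Type*} [Fintype W] (G : SimpleGraph W) {k : ℕ}
    (h : (G.induce ((Finset.univ : Finset W) : Set W)).Colorable k) : G.Colorable k := by
  rw [Finset.coe_univ] at h
  exact (colorable_induce_univ_iff G).mp h

lemma card_coe_finset_set {W : Type*} [Fintype W] [DecidableEq W] (s : Finset W) :
    Fintype.card ((s : Set W) : Type _) = s.card := by
  simp

lemma ng_ineq : ∀ (n : ℕ) {W : Type*} [Fintype W] [DecidableEq W] (G : SimpleGraph W),
    Fintype.card W = n → chiN G + chiN Gᶜ ≤ n + 1 := by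
  intro n
  induction n using Nat.strong_induction_on with
  | _ n ih =>
    intro W _ _ G hcard
    classical
    rcases Nat.eq_zero_or_pos n with hn | hn
    · subst hn
      have hE : IsEmpty W := Fintype.card_eq_zero_iff.mp hcard
      have h0 : ∀ (H : SimpleGraph W), chiN H = 0 := by
        intro H
        have hc : H.Colorable 0 := ⟨Coloring.mk (fun w => (hE.elim w)) (fun {u} _ => (hE.elim u))⟩
        exact Nat.le_zero.mp (chiN_le hc)
      rw [h0 G, h0 Gᶜ]
      omega
    · obtain ⟨v⟩ : Nonempty W := Fintype.card_pos_iff.mp (hcard ▸ hn)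
      set s : Finset W := Finset.univ.erase v with hs
      have hscard : s.card = n - 1 := by
        rw [hs, Finset.card_erase_of_mem (Finset.mem_univ v), Finset.card_univ, hcard]
      have hcardW' : Fintype.card ((s : Set W) : Type _) = n - 1 := by
        rw [card_coe_finset_set, hscard]
      have hIH := ih (n-1) (by omega) (G.induce (s : Set W)) hcardW'
      rw [induce_compl_eq] at hIH
      set k := chiN (G.induce (s : Set W)) with hk
      set kb := chiN (Gᶜ.induce (s : Set W)) with hkb
      -- degree facts
      have hdc : Gᶜ.degree v = Fintype.card W - 1 - G.degree v := G.degree_compl v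
      have hdlt : G.degree v < n := hcard ▸ G.degree_lt_card_verts v
      -- bounds
      have b1 : chiN G ≤ max k (G.degree v + 1) := by
        apply chiN_le
        apply colorable_of_induce_univ_finset
        refine colorable_insert G Finset.univ v _ ?_ (G.neighborFinset v) ?_ ?_
        · exact (chiN_colorable _).mono (le_max_left _ _)
        · intro u hu hadj
          exact (G.mem_neighborFinset v u).mpr hadj
        · rw [G.card_neighborFinset_eq_degree]
          exact le_max_right _ _
      have b1' : chiN G ≤ k + 1 := by
        apply chiN_le
        apply colorable_of_induce_univ_finset
        exact colorable_insert_succ G Finset.univ v _ (chiN_colorable _)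
      have b2 : chiN Gᶜ ≤ max kb (Gᶜ.degree v + 1) := by
        apply chiN_le
        apply colorable_of_induce_univ_finset
        refine colorable_insert Gᶜ Finset.univ v _ ?_ (Gᶜ.neighborFinset v) ?_ ?_
        · exact (chiN_colorable _).mono (le_max_left _ _)
        · intro u hu hadj
          exact (Gᶜ.mem_neighborFinset v u).mpr hadj
        · rw [Gᶜ.card_neighborFinset_eq_degree]
          exact le_max_right _ _
      have b2' : chiN Gᶜ ≤ kb + 1 := by
        apply chiN_le
        apply colorable_of_induce_univ_finset
        exact colorable_insert_succ Gᶜ Finset.univ v _ (chiN_colorable _)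
      rcases le_max_iff.mp b1 with h1 | h1 <;> rcases le_max_iff.mp b2 with h2 | h2 <;> omega

end NGaux

/-- In an NG-graph, every vertex of `B_G` is adjacent to every other vertex of
`A_G ∪ B_G`. -/
theorem stmt10 (G : SimpleGraph V) [DecidableRel G.Adj] (hNG : IsNG G) :
    ∀ y ∈ setB G, ∀ x ∈ setA G ∪ setB G, x ≠ y → G.Adj x y := by
  intro y hy x hx hne
  by_contra hadj
  classical
  set n := Fintype.card V with hn
  set χ := chiN G with hχ
  set χb := chiN Gᶜ with hχb
  have hcn : chromNat G = χ := chromNat_eq_chiN G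
  have hcnb : chromNat Gᶜ = χb := chromNat_eq_chiN Gᶜ
  have hNG' : χ + χb = n + 1 := by
    have h := hNG
    unfold IsNG at h
    rw [hcn, hcnb, Nat.card_eq_fintype_card] at h
    exact h
  have hχ1 : 1 ≤ χ := by
    by_contra h
    have h0 : χ = 0 := by omega
    have hc := chiN_colorable G
    rw [← hχ, h0] at hc
    obtain ⟨C⟩ := hc
    exact Fin.elim0 (C y)
  have hy' : G.degree y > chromNat G - 1 := hy
  have hdy : G.degree y ≥ χ := by rw [hcn] at hy'; omega
  have hdx : G.degree x + 1 ≥ χ := by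
    rcases hx with hx | hx
    · have hx' : G.degree x = chromNat G - 1 := hx
      rw [hcn] at hx'; omega
    · have hx' : G.degree x > chromNat G - 1 := hx
      rw [hcn] at hx'; omega
  have dy_lt : G.degree y < n := G.degree_lt_card_verts y
  have dx_lt : G.degree x < n := G.degree_lt_card_verts x
  have hdcy : Gᶜ.degree y = n - 1 - G.degree y := G.degree_compl y
  have hdcx : Gᶜ.degree x = n - 1 - G.degree x := G.degree_compl x
  have hHxy : Gᶜ.Adj x y := by rw [compl_adj]; exact ⟨hne, hadj⟩
  have hdcx_pos : 0 < Gᶜ.degree x := (Gᶜ.degree_pos_iff_exists_adj x).mpr ⟨y, hHxy⟩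
  set t2 : Finset V := (Finset.univ.erase y).erase x with ht2
  set k1 := chiN (Gᶜ.induce ((Finset.univ.erase y : Finset V) : Set V)) with hk1
  set k2 := chiN (Gᶜ.induce (t2 : Set V)) with hk2
  set m := chiN (G.induce (t2 : Set V)) with hm
  have S1 : χb ≤ max k1 (Gᶜ.degree y + 1) := by
    apply chiN_le
    apply colorable_of_induce_univ_finset
    refine colorable_insert Gᶜ Finset.univ y _ ((chiN_colorable _).mono (le_max_left _ _))
      (Gᶜ.neighborFinset y) (fun u _ hadju => (Gᶜ.mem_neighborFinset y u).mpr hadju) ?_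
    rw [Gᶜ.card_neighborFinset_eq_degree]
    exact le_max_right _ _
  have S3 : k1 ≤ max k2 (Gᶜ.degree x) := by
    apply chiN_le
    refine colorable_insert Gᶜ (Finset.univ.erase y) x _
      ((chiN_colorable _).mono (le_max_left _ _)) ((Gᶜ.neighborFinset x).erase y) ?_ ?_
    · intro u hu hadju
      refine Finset.mem_erase.mpr ⟨?_, (Gᶜ.mem_neighborFinset x u).mpr hadju⟩
      exact (Finset.mem_erase.mp (Finset.mem_erase.mp hu).2).1
    · rw [Finset.card_erase_of_mem ((Gᶜ.mem_neighborFinset x y).mpr hHxy),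
        Gᶜ.card_neighborFinset_eq_degree]
      have := le_max_right k2 (Gᶜ.degree x)
      omega
  have S4 : k2 + m ≤ n - 1 := by
    have hc2 : Fintype.card ((t2 : Set V) : Type _) = n - 2 := by
      rw [card_coe_finset_set, ht2,
        Finset.card_erase_of_mem (Finset.mem_erase.mpr ⟨hne, Finset.mem_univ x⟩),
        Finset.card_erase_of_mem (Finset.mem_univ y), Finset.card_univ]
      rfl
    have h4 := ng_ineq (n - 2) (Gᶜ.induce (t2 : Set V)) hc2
    rw [induce_compl_eq Gᶜ, compl_compl] at h4
    rw [← hk2, ← hm] at h4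
    omega
  have S5 : χ ≤ m + 1 := chiN_le (colorable_pair G hne hadj m (chiN_colorable _))
  rcases le_max_iff.mp S1 with h1 | h1 <;> rcases le_max_iff.mp S3 with h3 | h3 <;> omega
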